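/- Let d>0, α∈ℝ, T>0, h1<h2, set L=h2−h1, and let β,γ:[h1,h2]×ℝ→ℝ be continuous, positive, and T-periodic in t. Define γ_m(t)=min_{x∈[h1,h2]}γ(x,t), γ_M(t)=max_{x∈[h1,h2]}γ(x,t), β_m(t)=min_{x∈[h1,h2]}β(x,t), β_M(t)=max_{x∈[h1,h2]}β(x,t). Suppose μ0>0 and φ:[h1,h2]×ℝ→ℝ is T-periodic in t, continuous together with φ_t,φ_x,φ_xx (φ_x continuous up to the boundary), positive on (h1,h2)×ℝ, with φ(h1,t)=φ(h2,t)=0, and satisfies φ_t−dφ_xx+αφ_x=−γ(x,t)φ+(β(x,t)/μ0)φ on (h1,h2)×ℝ. Then ((1/T)∫_0^Tβ_m(t)dt)/(d(π/L)²+α²/(4d)+(1/T)∫_0^Tγ_M(t)dt) ≤ μ0 ≤ ((1/T)∫_0^Tβ_M(t)dt)/(d(π/L)²+α²/(4d)+(1/T)∫_0^Tγ_m(t)dt). -/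

import Mathlib

noncomputable def pX (u : ℝ → ℝ → ℝ) (x t : ℝ) : ℝ := deriv (fun y => u y t) x
noncomputable def pXX (u : ℝ → ℝ → ℝ) (x t : ℝ) : ℝ := deriv (fun y => pX u y t) x
noncomputable def pT (u : ℝ → ℝ → ℝ) (x t : ℝ) : ℝ := deriv (fun s => u x s) t

/-!
Let `Λ = d (π/L)² + α²/(4d)` and `w(x) = e^{-αx/(2d)} sin(π(x-h1)/L)`, which vanishes at the ends,
is positive inside and solves the adjoint equation `d w'' + α w' = -Λ w`. Testing the equation of
`φ` against `w` and integrating by parts twice, the positive `T`-periodic function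
`J(t) = ∫ φ(x,t) w(x) dx` satisfies `J' = -Λ J + ∫ (β/μ0 - γ) φ w`, hence
`(βₘ/μ0 - γ_M - Λ) J ≤ J' ≤ (β_M/μ0 - γₘ - Λ) J`. Since `log J` is `T`-periodic, integrating
`J'/J` over a period gives `∫ (βₘ/μ0 - γ_M) ≤ T Λ ≤ ∫ (β_M/μ0 - γₘ)`, which rearranges to the
two bounds.
-/

open Set MeasureTheory intervalIntegral Real Interval

theorem ContinuousOn.continuous_comp_projIcc_prod {f : ℝ → ℝ → ℝ} {a b : ℝ} (hab : a ≤ b)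
    (hf : ContinuousOn (fun p : ℝ × ℝ => f p.1 p.2) (Icc a b ×ˢ univ)) :
    Continuous fun p : ℝ × ℝ => f (projIcc a b hab p.2) p.1 :=
  hf.comp_continuous
    ((continuous_subtype_val.comp ((continuous_projIcc (h := hab)).comp continuous_snd)).prodMk
      continuous_fst) fun _ => ⟨Subtype.prop _, trivial⟩

theorem continuous_of_isGreatest_image_Icc {f : ℝ → ℝ → ℝ} {a b : ℝ} (hab : a ≤ b)
    (hf : ContinuousOn (fun p : ℝ × ℝ => f p.1 p.2) (Icc a b ×ˢ univ)) {g : ℝ → ℝ}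
    (hg : ∀ t, IsGreatest ((fun x => f x t) '' Icc a b) (g t)) : Continuous g := by
  convert isCompact_Icc.continuous_sSup (f := fun t x => f (projIcc a b hab x) t)
    (hf.continuous_comp_projIcc_prod hab) with t
  rw [← (hg t).csSup_eq]
  exact congrArg sSup (image_congr fun x hx => by rw [projIcc_of_mem hab hx])

theorem continuous_of_isLeast_image_Icc {f : ℝ → ℝ → ℝ} {a b : ℝ} (hab : a ≤ b)
    (hf : ContinuousOn (fun p : ℝ × ℝ => f p.1 p.2) (Icc a b ×ˢ univ)) {g : ℝ → ℝ}
    (hg : ∀ t, IsLeast ((fun x => f x t) '' Icc a b) (g t)) : Continuous g := by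
  convert isCompact_Icc.continuous_sInf (f := fun t x => f (projIcc a b hab x) t)
    (hf.continuous_comp_projIcc_prod hab) with t
  rw [← (hg t).csInf_eq]
  exact congrArg sInf (image_congr fun x hx => by rw [projIcc_of_mem hab hx])

theorem ContinuousOn.comp_prodMk_const {F : ℝ → ℝ → ℝ} {s : Set ℝ}
    (hF : ContinuousOn (fun p : ℝ × ℝ => F p.1 p.2) (s ×ˢ univ)) (t : ℝ) :
    ContinuousOn (fun x => F x t) s :=
  hF.comp (continuous_id.prodMk continuous_const).continuousOn fun _ hx => ⟨hx, trivial⟩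

theorem hasDerivAt_intervalIntegral_of_continuousOn_pT {F : ℝ → ℝ → ℝ} {a b : ℝ} (hab : a ≤ b)
    (hF : ∀ t, ContinuousOn (fun x => F x t) (Icc a b))
    (hFt : ContinuousOn (fun p : ℝ × ℝ => pT F p.1 p.2) (Icc a b ×ˢ univ))
    (hdiff : ∀ x ∈ Icc a b, ∀ t, DifferentiableAt ℝ (fun s => F x s) t) (t₀ : ℝ) :
    HasDerivAt (fun t => ∫ x in a..b, F x t) (∫ x in a..b, pT F x t₀) t₀ := by
  have hIoc : Ι a b ⊆ Icc a b := by rw [uIoc_of_le hab]; exact Ioc_subset_Icc_self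
  have hmeas (G : ℝ → ℝ → ℝ) (hG : ∀ t, ContinuousOn (fun x => G x t) (Icc a b))
      (t : ℝ) : AEStronglyMeasurable (fun x => G x t) (volume.restrict (Ι a b)) :=
    ((hG t).mono hIoc).aestronglyMeasurable measurableSet_uIoc
  obtain ⟨C, hC⟩ := (isCompact_Icc.prod (isCompact_Icc (a := t₀ - 1) (b := t₀ + 1))
    ).exists_bound_of_continuousOn (hFt.mono (prod_mono_right (subset_univ _)))
  refine (intervalIntegral.hasDerivAt_integral_of_dominated_loc_of_deriv_le
    (F := fun t x => F x t) (F' := fun t x => pT F x t) (bound := fun _ => C)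
    (Metric.ball_mem_nhds t₀ one_pos)
    (Filter.Eventually.of_forall (hmeas F hF))
    ((hF t₀).intervalIntegrable_of_Icc hab) (hmeas _ hFt.comp_prodMk_const t₀)
    (Filter.Eventually.of_forall fun x hx t ht => hC (x, t) ⟨hIoc hx, ?_⟩)
    intervalIntegrable_const
    (Filter.Eventually.of_forall fun x hx t _ => (hdiff x (hIoc hx) t).hasDerivAt)).2
  rw [Metric.mem_ball, Real.dist_eq, abs_lt] at ht
  constructor <;> linarith [ht.1, ht.2]

theorem integral_deriv_mul_eq_neg_integral_mul_deriv {u u' v v' : ℝ → ℝ} {a b : ℝ}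
    (hu : ∀ x ∈ uIcc a b, HasDerivAt u (u' x) x) (hv : ∀ x ∈ uIcc a b, HasDerivAt v (v' x) x)
    (hu' : IntervalIntegrable u' volume a b) (hv' : IntervalIntegrable v' volume a b)
    (ha : u a * v a = 0) (hb : u b * v b = 0) :
    ∫ x in a..b, u' x * v x = -∫ x in a..b, u x * v' x := by
  rw [intervalIntegral.integral_mul_deriv_eq_deriv_mul hu hv hu' hv', ha, hb]
  ring

theorem integral_mul_eq_integral_mul_formalAdjoint {u u' u'' w w' w'' : ℝ → ℝ} {a b : ℝ}
    (d α : ℝ)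
    (hu : ∀ x ∈ uIcc a b, HasDerivAt u (u' x) x) (hu' : ∀ x ∈ uIcc a b, HasDerivAt u' (u'' x) x)
    (hw : ∀ x ∈ uIcc a b, HasDerivAt w (w' x) x) (hw' : ∀ x ∈ uIcc a b, HasDerivAt w' (w'' x) x)
    (hu'' : IntervalIntegrable u'' volume a b) (hw'' : IntervalIntegrable w'' volume a b)
    (hua : u a = 0) (hub : u b = 0) (hwa : w a = 0) (hwb : w b = 0) :
    ∫ x in a..b, (d * u'' x - α * u' x) * w x = ∫ x in a..b, u x * (d * w'' x + α * w' x) := by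
  have huc := HasDerivAt.continuousOn hu
  have hwc := HasDerivAt.continuousOn hw
  have hu'i := (HasDerivAt.continuousOn hu').intervalIntegrable (μ := volume)
  have hw'i := (HasDerivAt.continuousOn hw').intervalIntegrable (μ := volume)
  have h2 : ∫ x in a..b, u'' x * w x = ∫ x in a..b, u x * w'' x := by
    rw [integral_deriv_mul_eq_neg_integral_mul_deriv hu' hw hu'' hw'i (by simp [hwa])
      (by simp [hwb]), integral_deriv_mul_eq_neg_integral_mul_deriv hu hw' hu'i hw''
      (by simp [hua]) (by simp [hub]), neg_neg]
  have h1 : ∫ x in a..b, u' x * w x = -∫ x in a..b, u x * w' x :=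
    integral_deriv_mul_eq_neg_integral_mul_deriv hu hw hu'i hw'i (by simp [hua]) (by simp [hub])
  have hL : ∫ x in a..b, (d * u'' x - α * u' x) * w x
      = d * (∫ x in a..b, u'' x * w x) - α * ∫ x in a..b, u' x * w x := by
    simp only [sub_mul, mul_assoc]
    rw [intervalIntegral.integral_sub, intervalIntegral.integral_const_mul,
      intervalIntegral.integral_const_mul]
    exacts [(hu''.mul_continuousOn hwc).const_mul d, (hu'i.mul_continuousOn hwc).const_mul α]
  have hR : ∫ x in a..b, u x * (d * w'' x + α * w' x)
      = d * (∫ x in a..b, u x * w'' x) + α * ∫ x in a..b, u x * w' x := by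
    simp only [mul_add, mul_left_comm (u _)]
    rw [intervalIntegral.integral_add, intervalIntegral.integral_const_mul,
      intervalIntegral.integral_const_mul]
    exacts [(hw''.continuousOn_mul huc).const_mul d, (hw'i.continuousOn_mul huc).const_mul α]
  linear_combination hL - hR + d * h2 - α * h1

noncomputable def dirichletPrincipalEigenvalue (d α L : ℝ) : ℝ := d * (π / L) ^ 2 + α ^ 2 / (4 * d)

theorem dirichletPrincipalEigenvalue_nonneg {d : ℝ} (hd : 0 ≤ d) (α L : ℝ) :
    0 ≤ dirichletPrincipalEigenvalue d α L := by
  unfold dirichletPrincipalEigenvalue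
  positivity

/-- The factor `e^{-αx/(2d)}` removes the drift term, leaving the first Dirichlet sine mode. -/
noncomputable def adjointDirichletEigenfunction (d α a b x : ℝ) : ℝ :=
  exp (-(α / (2 * d)) * x) * sin (π / (b - a) * (x - a))

namespace adjointDirichletEigenfunction

variable {d α a b : ℝ}

theorem apply_left : adjointDirichletEigenfunction d α a b a = 0 := by
  simp [adjointDirichletEigenfunction]

theorem apply_right (hab : a ≠ b) : adjointDirichletEigenfunction d α a b b = 0 := by
  simp [adjointDirichletEigenfunction, div_mul_cancel₀ _ (sub_ne_zero.2 hab.symm)]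

theorem pos {x : ℝ} (hx : x ∈ Ioo a b) : 0 < adjointDirichletEigenfunction d α a b x := by
  have hba : 0 < b - a := sub_pos.2 (hx.1.trans hx.2)
  refine mul_pos (exp_pos _) (sin_pos_of_pos_of_lt_pi (by have := sub_pos.2 hx.1; positivity) ?_)
  rw [div_mul_eq_mul_div, div_lt_iff₀ hba]
  exact mul_lt_mul_of_pos_left (by linarith [hx.2]) pi_pos

theorem continuous : Continuous (adjointDirichletEigenfunction d α a b) := by
  unfold adjointDirichletEigenfunction; fun_prop

theorem exists_hasDerivAt_ode (hd : d ≠ 0) :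
    ∃ w' w'' : ℝ → ℝ, (∀ x, HasDerivAt (adjointDirichletEigenfunction d α a b) (w' x) x) ∧
      (∀ x, HasDerivAt w' (w'' x) x) ∧ Continuous w'' ∧
      ∀ x, d * w'' x + α * w' x =
        -dirichletPrincipalEigenvalue d α (b - a) * adjointDirichletEigenfunction d α a b x := by
  set c := -(α / (2 * d))
  set k := π / (b - a)
  have hE (x : ℝ) : HasDerivAt (fun y => exp (c * y)) (exp (c * x) * c) x := by
    simpa using ((hasDerivAt_id x).const_mul c).exp
  have hS (x : ℝ) : HasDerivAt (fun y => sin (k * (y - a))) (cos (k * (x - a)) * k) x := by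
    simpa using (((hasDerivAt_id x).sub_const a).const_mul k).sin
  have hC (x : ℝ) : HasDerivAt (fun y => cos (k * (y - a))) (-sin (k * (x - a)) * k) x := by
    simpa using (((hasDerivAt_id x).sub_const a).const_mul k).cos
  refine ⟨fun x => exp (c * x) * (c * sin (k * (x - a)) + k * cos (k * (x - a))),
    fun x => exp (c * x) * ((c ^ 2 - k ^ 2) * sin (k * (x - a)) + 2 * c * k * cos (k * (x - a))),
    fun x => ((hE x).mul (hS x)).congr_deriv (by ring),
    fun x => ((hE x).mul (((hS x).const_mul c).add ((hC x).const_mul k))).congr_deriv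
      (by simp only [Pi.add_apply]; ring),
    by fun_prop, fun x => ?_⟩
  simp only [adjointDirichletEigenfunction, dirichletPrincipalEigenvalue, c, k]
  field_simp
  ring

end adjointDirichletEigenfunction

theorem hasDerivAt_integral_mul_adjointDirichletEigenfunction {d α a b : ℝ} (hd : d ≠ 0)
    (hab : a < b) {c φ : ℝ → ℝ → ℝ}
    (hc : ContinuousOn (fun p : ℝ × ℝ => c p.1 p.2) (Icc a b ×ˢ univ))
    (hφxxc : ContinuousOn (fun p : ℝ × ℝ => pXX φ p.1 p.2) (Icc a b ×ˢ univ))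
    (hφtc : ContinuousOn (fun p : ℝ × ℝ => pT φ p.1 p.2) (Icc a b ×ˢ univ))
    (hφdiff : ∀ t : ℝ, ∀ x ∈ Icc a b,
      DifferentiableAt ℝ (fun y => φ y t) x ∧
      DifferentiableAt ℝ (fun y => pX φ y t) x ∧
      DifferentiableAt ℝ (fun s => φ x s) t)
    (hφbc : ∀ t : ℝ, φ a t = 0 ∧ φ b t = 0)
    (hφpde : ∀ t : ℝ, ∀ x ∈ Ioo a b,
      pT φ x t - d * pXX φ x t + α * pX φ x t = c x t * φ x t) (t : ℝ) :
    HasDerivAt (fun s => ∫ x in a..b, φ x s * adjointDirichletEigenfunction d α a b x)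
      (-dirichletPrincipalEigenvalue d α (b - a) *
          (∫ x in a..b, φ x t * adjointDirichletEigenfunction d α a b x) +
        ∫ x in a..b, c x t * (φ x t * adjointDirichletEigenfunction d α a b x)) t := by
  set w := adjointDirichletEigenfunction d α a b
  obtain ⟨w', w'', hw', hw'', hw''c, hwode⟩ :=
    adjointDirichletEigenfunction.exists_hasDerivAt_ode (α := α) (a := a) (b := b) hd
  have hwc : ContinuousOn w (Icc a b) := adjointDirichletEigenfunction.continuous.continuousOn
  have hφc (s : ℝ) : ContinuousOn (fun x => φ x s) (Icc a b) :=
    fun x hx => (hφdiff s x hx).1.continuousAt.continuousWithinAt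
  have hφxc : ContinuousOn (fun x => pX φ x t) (Icc a b) :=
    fun x hx => (hφdiff t x hx).2.1.continuousAt.continuousWithinAt
  have hpT (x s : ℝ) : pT (fun x s => φ x s * w x) x s = pT φ x s * w x :=
    deriv_mul_const_field _
  have hderiv := hasDerivAt_intervalIntegral_of_continuousOn_pT (F := fun x s => φ x s * w x)
    hab.le (fun s => (hφc s).mul hwc)
    ((hφtc.mul (adjointDirichletEigenfunction.continuous.comp continuous_fst).continuousOn).congr
      fun p _ => hpT p.1 p.2)
    (fun x hx s => (hφdiff s x hx).2.2.mul_const _) t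
  simp only [hpT] at hderiv
  refine hderiv.congr_deriv ?_
  have hIcc : ∀ x ∈ uIcc a b, x ∈ Icc a b := fun x hx => by rwa [uIcc_of_le hab.le] at hx
  have hgreen := integral_mul_eq_integral_mul_formalAdjoint (u := fun y => φ y t)
    (u' := fun y => pX φ y t) (u'' := fun y => pXX φ y t) d α
    (fun x hx => (hφdiff t x (hIcc x hx)).1.hasDerivAt)
    (fun x hx => (hφdiff t x (hIcc x hx)).2.1.hasDerivAt)
    (fun x _ => hw' x) (fun x _ => hw'' x)
    ((hφxxc.comp_prodMk_const t).intervalIntegrable_of_Icc hab.le)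
    (hw''c.intervalIntegrable _ _) (hφbc t).1 (hφbc t).2
    adjointDirichletEigenfunction.apply_left (adjointDirichletEigenfunction.apply_right hab.ne)
  simp only [hwode, mul_left_comm (φ _ t), intervalIntegral.integral_const_mul] at hgreen
  calc ∫ x in a..b, pT φ x t * w x
      = ∫ x in a..b, ((d * pXX φ x t - α * pX φ x t) * w x + c x t * (φ x t * w x)) :=
        integral_congr_Ioo_of_le hab.le fun x hx => by
          linear_combination w x * hφpde t x hx
    _ = _ := by
        rw [intervalIntegral.integral_add, hgreen]
        · exact ((((hφxxc.comp_prodMk_const t).const_smul d).sub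
            (hφxc.const_smul α)).mul hwc).intervalIntegrable_of_Icc hab.le
        · exact ((hc.comp_prodMk_const t).mul ((hφc t).mul hwc)).intervalIntegrable_of_Icc hab.le

theorem integral_nonneg_of_deriv_le_mul_of_eq {J J' r : ℝ → ℝ} {a b : ℝ} (hab : a ≤ b)
    (hJ : ∀ t ∈ Icc a b, HasDerivAt J (J' t) t) (hJpos : ∀ t ∈ Icc a b, 0 < J t)
    (hper : J b = J a) (hr : IntervalIntegrable r volume a b)
    (hle : ∀ t ∈ Ioo a b, J' t ≤ r t * J t) : 0 ≤ ∫ t in a..b, r t := by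
  have hlog (t : ℝ) (ht : t ∈ Icc a b) : HasDerivAt (fun u => log (J u)) (J' t / J t) t :=
    (hJ t ht).log (hJpos t ht).ne'
  have := sub_le_integral_of_hasDeriv_right_of_le hab
    (fun t ht => (hlog t ht).continuousAt.continuousWithinAt)
    (fun t ht => (hlog t (Ioo_subset_Icc_self ht)).hasDerivWithinAt)
    ((intervalIntegrable_iff_integrableOn_Icc_of_le hab).1 hr)
    (fun t ht => (div_le_iff₀ (hJpos t (Ioo_subset_Icc_self ht))).2 (hle t ht))
  simpa [hper] using this

theorem integral_nonpos_of_mul_le_deriv_of_eq {J J' r : ℝ → ℝ} {a b : ℝ} (hab : a ≤ b)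
    (hJ : ∀ t ∈ Icc a b, HasDerivAt J (J' t) t) (hJpos : ∀ t ∈ Icc a b, 0 < J t)
    (hper : J b = J a) (hr : IntervalIntegrable r volume a b)
    (hle : ∀ t ∈ Ioo a b, r t * J t ≤ J' t) : ∫ t in a..b, r t ≤ 0 := by
  have hlog (t : ℝ) (ht : t ∈ Icc a b) : HasDerivAt (fun u => log (J u)) (J' t / J t) t :=
    (hJ t ht).log (hJpos t ht).ne'
  have := integral_le_sub_of_hasDeriv_right_of_le hab
    (fun t ht => (hlog t ht).continuousAt.continuousWithinAt)
    (fun t ht => (hlog t (Ioo_subset_Icc_self ht)).hasDerivWithinAt)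
    ((intervalIntegrable_iff_integrableOn_Icc_of_le hab).1 hr)
    (fun t ht => (le_div_iff₀ (hJpos t (Ioo_subset_Icc_self ht))).2 (hle t ht))
  simpa [hper] using this

theorem nonneg_of_pos_on_Ioo {f : ℝ → ℝ} {a b : ℝ} (hpos : ∀ x ∈ Ioo a b, 0 < f x)
    (ha : f a = 0) (hb : f b = 0) : ∀ x ∈ Icc a b, 0 ≤ f x := by
  rintro x ⟨hax, hxb⟩
  rcases hax.eq_or_lt with rfl | hax
  · exact ha.ge
  rcases hxb.eq_or_lt with rfl | hxb
  · exact hb.ge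
  exact (hpos x ⟨hax, hxb⟩).le

theorem const_mul_integral_le_integral_mul {f g : ℝ → ℝ} {a b m : ℝ} (hab : a ≤ b)
    (hfg : IntervalIntegrable (fun x => f x * g x) volume a b)
    (hg : IntervalIntegrable g volume a b) (hg0 : ∀ x ∈ Icc a b, 0 ≤ g x)
    (hm : ∀ x ∈ Icc a b, m ≤ f x) : m * ∫ x in a..b, g x ≤ ∫ x in a..b, f x * g x := by
  rw [← intervalIntegral.integral_const_mul]
  exact integral_mono_on hab (hg.const_mul m) hfg fun x hx =>
    mul_le_mul_of_nonneg_right (hm x hx) (hg0 x hx)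

theorem integral_mul_le_const_mul_integral {f g : ℝ → ℝ} {a b M : ℝ} (hab : a ≤ b)
    (hfg : IntervalIntegrable (fun x => f x * g x) volume a b)
    (hg : IntervalIntegrable g volume a b) (hg0 : ∀ x ∈ Icc a b, 0 ≤ g x)
    (hM : ∀ x ∈ Icc a b, f x ≤ M) : ∫ x in a..b, f x * g x ≤ M * ∫ x in a..b, g x := by
  rw [← intervalIntegral.integral_const_mul]
  exact integral_mono_on hab hfg (hg.const_mul M) fun x hx =>
    mul_le_mul_of_nonneg_right (hM x hx) (hg0 x hx)

theorem integral_le_mul_dirichletPrincipalEigenvalue_le {d α T a b : ℝ} (hd : d ≠ 0)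
    (hT : 0 ≤ T) (hab : a < b) {c φ : ℝ → ℝ → ℝ} {cm cM : ℝ → ℝ}
    (hc : ContinuousOn (fun p : ℝ × ℝ => c p.1 p.2) (Icc a b ×ˢ univ))
    (hcm : IntervalIntegrable cm volume 0 T) (hcM : IntervalIntegrable cM volume 0 T)
    (hcm_le : ∀ t, ∀ x ∈ Icc a b, cm t ≤ c x t) (hle_cM : ∀ t, ∀ x ∈ Icc a b, c x t ≤ cM t)
    (hφper : ∀ x, φ x T = φ x 0)
    (hφxxc : ContinuousOn (fun p : ℝ × ℝ => pXX φ p.1 p.2) (Icc a b ×ˢ univ))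
    (hφtc : ContinuousOn (fun p : ℝ × ℝ => pT φ p.1 p.2) (Icc a b ×ˢ univ))
    (hφdiff : ∀ t : ℝ, ∀ x ∈ Icc a b,
      DifferentiableAt ℝ (fun y => φ y t) x ∧
      DifferentiableAt ℝ (fun y => pX φ y t) x ∧
      DifferentiableAt ℝ (fun s => φ x s) t)
    (hφbc : ∀ t : ℝ, φ a t = 0 ∧ φ b t = 0)
    (hφpos : ∀ t : ℝ, ∀ x ∈ Ioo a b, 0 < φ x t)
    (hφpde : ∀ t : ℝ, ∀ x ∈ Ioo a b,
      pT φ x t - d * pXX φ x t + α * pX φ x t = c x t * φ x t) :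
    ∫ t in (0 : ℝ)..T, cm t ≤ T * dirichletPrincipalEigenvalue d α (b - a) ∧
      T * dirichletPrincipalEigenvalue d α (b - a) ≤ ∫ t in (0 : ℝ)..T, cM t := by
  set w := adjointDirichletEigenfunction d α a b
  set J := fun t => ∫ x in a..b, φ x t * w x
  have hJ := hasDerivAt_integral_mul_adjointDirichletEigenfunction hd hab hc hφxxc hφtc hφdiff
    hφbc hφpde
  have hφw (t : ℝ) : IntervalIntegrable (fun x => φ x t * w x) volume a b :=
    (ContinuousOn.mul (fun x hx => (hφdiff t x hx).1.continuousAt.continuousWithinAt)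
      adjointDirichletEigenfunction.continuous.continuousOn).intervalIntegrable_of_Icc hab.le
  have hcφw (t : ℝ) : IntervalIntegrable (fun x => c x t * (φ x t * w x)) volume a b :=
    (hφw t).continuousOn_mul ((uIcc_of_le hab.le).symm ▸ hc.comp_prodMk_const t)
  have hφwpos (t : ℝ) (x : ℝ) (hx : x ∈ Ioo a b) : 0 < φ x t * w x :=
    mul_pos (hφpos t x hx) (adjointDirichletEigenfunction.pos hx)
  have hφw0 (t : ℝ) : ∀ x ∈ Icc a b, 0 ≤ φ x t * w x :=
    nonneg_of_pos_on_Ioo (hφwpos t) (by simp [(hφbc t).1]) (by simp [(hφbc t).2])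
  have hJpos (t : ℝ) : 0 < J t := intervalIntegral_pos_of_pos_on (hφw t) (hφwpos t) hab
  have hJper : J T = J 0 := by simp only [J, hφper]
  set Λ := dirichletPrincipalEigenvalue d α (b - a)
  constructor
  · have hlower := integral_nonpos_of_mul_le_deriv_of_eq (r := fun t => cm t - Λ) hT
      (fun t _ => hJ t) (fun t _ => hJpos t) hJper (hcm.sub intervalIntegrable_const) fun t _ => by
        have := const_mul_integral_le_integral_mul hab.le (hcφw t) (hφw t) (hφw0 t) (hcm_le t)
        rw [sub_mul]
        linarith
    rw [intervalIntegral.integral_sub hcm intervalIntegrable_const,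
      intervalIntegral.integral_const] at hlower
    simpa [sub_nonpos] using hlower
  · have hupper := integral_nonneg_of_deriv_le_mul_of_eq (r := fun t => cM t - Λ) hT
      (fun t _ => hJ t) (fun t _ => hJpos t) hJper (hcM.sub intervalIntegrable_const) fun t _ => by
        have := integral_mul_le_const_mul_integral hab.le (hcφw t) (hφw t) (hφw0 t) (hle_cM t)
        rw [sub_mul]
        linarith
    rw [intervalIntegral.integral_sub hcM intervalIntegrable_const,
      intervalIntegral.integral_const] at hupper
    simpa [sub_nonneg] using hupper

theorem mean_div_le_of_integral_le {T μ Λ : ℝ} {u v : ℝ → ℝ} (hT : 0 < T) (hμ : 0 < μ)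
    (hΛ : 0 ≤ Λ) (hu : IntervalIntegrable u volume 0 T) (hv : IntervalIntegrable v volume 0 T)
    (hv0 : ∀ t ∈ Ioo 0 T, 0 < v t) (h : ∫ t in (0 : ℝ)..T, (u t / μ - v t) ≤ T * Λ) :
    (1 / T * ∫ t in (0 : ℝ)..T, u t) / (Λ + 1 / T * ∫ t in (0 : ℝ)..T, v t) ≤ μ := by
  have hV := intervalIntegral_pos_of_pos_on hv hv0 hT
  rw [intervalIntegral.integral_sub (hu.div_const μ) hv, intervalIntegral.integral_div,
    div_sub' hμ.ne', div_le_iff₀ hμ] at h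
  rw [div_le_iff₀ (by positivity)]
  calc 1 / T * ∫ t in (0 : ℝ)..T, u t
      ≤ 1 / T * (μ * (T * Λ + ∫ t in (0 : ℝ)..T, v t)) := by gcongr; linarith
    _ = μ * (Λ + 1 / T * ∫ t in (0 : ℝ)..T, v t) := by field_simp

theorem le_mean_div_of_le_integral {T μ Λ : ℝ} {u v : ℝ → ℝ} (hT : 0 < T) (hμ : 0 < μ)
    (hΛ : 0 ≤ Λ) (hu : IntervalIntegrable u volume 0 T) (hv : IntervalIntegrable v volume 0 T)
    (hv0 : ∀ t ∈ Ioo 0 T, 0 < v t) (h : T * Λ ≤ ∫ t in (0 : ℝ)..T, (u t / μ - v t)) :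
    μ ≤ (1 / T * ∫ t in (0 : ℝ)..T, u t) / (Λ + 1 / T * ∫ t in (0 : ℝ)..T, v t) := by
  have hV := intervalIntegral_pos_of_pos_on hv hv0 hT
  rw [intervalIntegral.integral_sub (hu.div_const μ) hv, intervalIntegral.integral_div,
    div_sub' hμ.ne', le_div_iff₀ hμ] at h
  rw [le_div_iff₀ (by positivity)]
  calc μ * (Λ + 1 / T * ∫ t in (0 : ℝ)..T, v t)
      = 1 / T * (μ * (T * Λ + ∫ t in (0 : ℝ)..T, v t)) := by field_simp
    _ ≤ 1 / T * ∫ t in (0 : ℝ)..T, u t := by gcongr; linarith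

theorem R0_bounds_by_extrema_general
    (d α T h1 h2 : ℝ) (hd : 0 < d) (hT : 0 < T) (hh : h1 < h2)
    (L : ℝ) (hL : L = h2 - h1)
    (β γ : ℝ → ℝ → ℝ)
    (hβc : ContinuousOn (fun p : ℝ × ℝ => β p.1 p.2) (Set.Icc h1 h2 ×ˢ Set.univ))
    (hγc : ContinuousOn (fun p : ℝ × ℝ => γ p.1 p.2) (Set.Icc h1 h2 ×ˢ Set.univ))
    (hγpos : ∀ x ∈ Set.Icc h1 h2, ∀ t : ℝ, 0 < γ x t)
    -- the spatial extrema of the coefficients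
    (βm βM γm γM : ℝ → ℝ)
    (hβm : ∀ t, IsLeast ((fun x => β x t) '' Set.Icc h1 h2) (βm t))
    (hβM : ∀ t, IsGreatest ((fun x => β x t) '' Set.Icc h1 h2) (βM t))
    (hγm : ∀ t, IsLeast ((fun x => γ x t) '' Set.Icc h1 h2) (γm t))
    (hγM : ∀ t, IsGreatest ((fun x => γ x t) '' Set.Icc h1 h2) (γM t))
    -- the positive T-periodic principal eigenpair (μ0, φ)
    (μ0 : ℝ) (hμ0 : 0 < μ0) (φ : ℝ → ℝ → ℝ)
    (hφper : ∀ x t, φ x (t + T) = φ x t)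
    (hφxxc : ContinuousOn (fun p : ℝ × ℝ => pXX φ p.1 p.2) (Set.Icc h1 h2 ×ˢ Set.univ))
    (hφtc : ContinuousOn (fun p : ℝ × ℝ => pT φ p.1 p.2) (Set.Icc h1 h2 ×ˢ Set.univ))
    (hφdiff : ∀ t : ℝ, ∀ x ∈ Set.Icc h1 h2,
      DifferentiableAt ℝ (fun y => φ y t) x ∧
      DifferentiableAt ℝ (fun y => pX φ y t) x ∧
      DifferentiableAt ℝ (fun s => φ x s) t)
    (hφbc : ∀ t : ℝ, φ h1 t = 0 ∧ φ h2 t = 0)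
    (hφpos : ∀ t : ℝ, ∀ x ∈ Set.Ioo h1 h2, 0 < φ x t)
    (hφpde : ∀ t : ℝ, ∀ x ∈ Set.Ioo h1 h2,
      pT φ x t - d * pXX φ x t + α * pX φ x t
        = -γ x t * φ x t + (β x t / μ0) * φ x t) :
    ((1 / T) * ∫ t in (0:ℝ)..T, βm t) /
        (d * (Real.pi / L) ^ 2 + α ^ 2 / (4 * d) + (1 / T) * ∫ t in (0:ℝ)..T, γM t)
      ≤ μ0 ∧
    μ0 ≤ ((1 / T) * ∫ t in (0:ℝ)..T, βM t) /
        (d * (Real.pi / L) ^ 2 + α ^ 2 / (4 * d) + (1 / T) * ∫ t in (0:ℝ)..T, γm t) := by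
  subst hL
  have hβmc := continuous_of_isLeast_image_Icc hh.le hβc hβm
  have hβMc := continuous_of_isGreatest_image_Icc hh.le hβc hβM
  have hγmc := continuous_of_isLeast_image_Icc hh.le hγc hγm
  have hγMc := continuous_of_isGreatest_image_Icc hh.le hγc hγM
  have pos_of_mem {g : ℝ → ℝ} (hg : ∀ t, g t ∈ (fun x => γ x t) '' Icc h1 h2) (t : ℝ) :
      0 < g t := by
    obtain ⟨x, hx, hxt⟩ := hg t
    exact hxt ▸ hγpos x hx t
  obtain ⟨hlower, hupper⟩ := integral_le_mul_dirichletPrincipalEigenvalue_le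
    (c := fun x t => β x t / μ0 - γ x t) (cm := fun t => βm t / μ0 - γM t)
    (cM := fun t => βM t / μ0 - γm t) hd.ne' hT.le hh ((hβc.div_const μ0).sub hγc)
    (((hβmc.div_const μ0).sub hγMc).intervalIntegrable 0 T)
    (((hβMc.div_const μ0).sub hγmc).intervalIntegrable 0 T)
    (fun t x hx => by gcongr; exacts [(hβm t).2 ⟨x, hx, rfl⟩, (hγM t).2 ⟨x, hx, rfl⟩])
    (fun t x hx => by gcongr; exacts [(hβM t).2 ⟨x, hx, rfl⟩, (hγm t).2 ⟨x, hx, rfl⟩])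
    (fun x => by simpa using hφper x 0) hφxxc hφtc hφdiff hφbc hφpos
    (fun t x hx => (hφpde t x hx).trans (by ring))
  have hΛ := dirichletPrincipalEigenvalue_nonneg hd.le α (h2 - h1)
  exact ⟨mean_div_le_of_integral_le hT hμ0 hΛ (hβmc.intervalIntegrable 0 T)
      (hγMc.intervalIntegrable 0 T) (fun t _ => pos_of_mem (fun t => (hγM t).1) t) hlower,
    le_mean_div_of_le_integral hT hμ0 hΛ (hβMc.intervalIntegrable 0 T)
      (hγmc.intervalIntegrable 0 T) (fun t _ => pos_of_mem (fun t => (hγm t).1) t) hupper⟩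

/-- **Theorem 3.4(2).** The principal eigenvalue `μ0` (the basic reproduction number
`R₀^D`) of the periodic-parabolic problem with heterogeneous coefficients is bounded
between the explicit values obtained from the spatial extrema of the coefficients:
`(1/T ∫βₘ)/(d(π/L)²+α²/(4d)+1/T ∫γ_M) ≤ μ0 ≤ (1/T ∫β_M)/(d(π/L)²+α²/(4d)+1/T ∫γₘ)`. -/
theorem R0_bounds_by_extrema
    (d α T h1 h2 : ℝ) (hd : 0 < d) (hT : 0 < T) (hh : h1 < h2)
    (L : ℝ) (hL : L = h2 - h1)
    (β γ : ℝ → ℝ → ℝ)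
    (hβc : ContinuousOn (fun p : ℝ × ℝ => β p.1 p.2) (Set.Icc h1 h2 ×ˢ Set.univ))
    (hγc : ContinuousOn (fun p : ℝ × ℝ => γ p.1 p.2) (Set.Icc h1 h2 ×ˢ Set.univ))
    (hβpos : ∀ x ∈ Set.Icc h1 h2, ∀ t : ℝ, 0 < β x t)
    (hγpos : ∀ x ∈ Set.Icc h1 h2, ∀ t : ℝ, 0 < γ x t)
    (hβper : ∀ x t, β x (t + T) = β x t) (hγper : ∀ x t, γ x (t + T) = γ x t)
    -- the spatial extrema of the coefficients
    (βm βM γm γM : ℝ → ℝ)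
    (hβm : ∀ t, IsLeast ((fun x => β x t) '' Set.Icc h1 h2) (βm t))
    (hβM : ∀ t, IsGreatest ((fun x => β x t) '' Set.Icc h1 h2) (βM t))
    (hγm : ∀ t, IsLeast ((fun x => γ x t) '' Set.Icc h1 h2) (γm t))
    (hγM : ∀ t, IsGreatest ((fun x => γ x t) '' Set.Icc h1 h2) (γM t))
    -- the positive T-periodic principal eigenpair (μ0, φ)
    (μ0 : ℝ) (hμ0 : 0 < μ0) (φ : ℝ → ℝ → ℝ)
    (hφper : ∀ x t, φ x (t + T) = φ x t)
    (hφc : ContinuousOn (fun p : ℝ × ℝ => φ p.1 p.2) (Set.Icc h1 h2 ×ˢ Set.univ))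
    (hφxc : ContinuousOn (fun p : ℝ × ℝ => pX φ p.1 p.2) (Set.Icc h1 h2 ×ˢ Set.univ))
    (hφxxc : ContinuousOn (fun p : ℝ × ℝ => pXX φ p.1 p.2) (Set.Icc h1 h2 ×ˢ Set.univ))
    (hφtc : ContinuousOn (fun p : ℝ × ℝ => pT φ p.1 p.2) (Set.Icc h1 h2 ×ˢ Set.univ))
    (hφdiff : ∀ t : ℝ, ∀ x ∈ Set.Icc h1 h2,
      DifferentiableAt ℝ (fun y => φ y t) x ∧
      DifferentiableAt ℝ (fun y => pX φ y t) x ∧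
      DifferentiableAt ℝ (fun s => φ x s) t)
    (hφbc : ∀ t : ℝ, φ h1 t = 0 ∧ φ h2 t = 0)
    (hφpos : ∀ t : ℝ, ∀ x ∈ Set.Ioo h1 h2, 0 < φ x t)
    (hφpde : ∀ t : ℝ, ∀ x ∈ Set.Ioo h1 h2,
      pT φ x t - d * pXX φ x t + α * pX φ x t
        = -γ x t * φ x t + (β x t / μ0) * φ x t) :
    ((1 / T) * ∫ t in (0:ℝ)..T, βm t) /
        (d * (Real.pi / L) ^ 2 + α ^ 2 / (4 * d) + (1 / T) * ∫ t in (0:ℝ)..T, γM t)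
      ≤ μ0 ∧
    μ0 ≤ ((1 / T) * ∫ t in (0:ℝ)..T, βM t) /
        (d * (Real.pi / L) ^ 2 + α ^ 2 / (4 * d) + (1 / T) * ∫ t in (0:ℝ)..T, γm t) :=
  R0_bounds_by_extrema_general d α T h1 h2 hd hT hh L hL β γ hβc hγc hγpos βm βM γm γM hβm hβM hγm
    hγM μ0 hμ0 φ hφper hφxxc hφtc hφdiff hφbc hφpos hφpde
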